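/- For i ∈ {1,2}, let Γ_i be a simple graph of order n_i admitting a partition Π_i of its vertex set into r_i ≥ 1 global defensive k_i-alliances, and let x_i be the minimum cardinality of a set in Π_i. Then γ_{k_1+k_2}^d(Γ_1×Γ_2) ≤ min{ x_1·n_2, x_2·n_1 }. -/

import Mathlib

open Finset

/-- The number of neighbors that the vertex `v` has inside the set `S`. -/
def degIn {V : Type*} [Fintype V] [DecidableEq V] (G : SimpleGraph V) [DecidableRel G.Adj]
    (S : Finset V) (v : V) : ℕ :=
  (S.filter fun u => G.Adj v u).card

/-- `S` is a defensive `k`-alliance: `S` is nonempty and every vertex of `S` has at least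
`k` more neighbors inside `S` than outside. -/
def IsDefensiveAlliance {V : Type*} [Fintype V] [DecidableEq V] (G : SimpleGraph V)
    [DecidableRel G.Adj] (k : ℤ) (S : Finset V) : Prop :=
  S.Nonempty ∧ ∀ v ∈ S, (degIn G Sᶜ v : ℤ) + k ≤ (degIn G S v : ℤ)

/-- `S` is a dominating set: every vertex outside `S` has a neighbor in `S`. -/
def IsDominatingSet {V : Type*} [Fintype V] [DecidableEq V] (G : SimpleGraph V)
    (S : Finset V) : Prop :=
  ∀ v ∉ S, ∃ u ∈ S, G.Adj v u

/-- A global defensive `k`-alliance is a defensive `k`-alliance which is a dominating set. -/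
def IsGlobalDefensiveAlliance {V : Type*} [Fintype V] [DecidableEq V] (G : SimpleGraph V)
    [DecidableRel G.Adj] (k : ℤ) (S : Finset V) : Prop :=
  IsDefensiveAlliance G k S ∧ IsDominatingSet G S

/-- The defensive `k`-alliance number: the minimum cardinality of a defensive `k`-alliance. -/
noncomputable def defAllianceNum {V : Type*} [Fintype V] [DecidableEq V] (G : SimpleGraph V)
    [DecidableRel G.Adj] (k : ℤ) : ℕ :=
  sInf {s : ℕ | ∃ S : Finset V, IsDefensiveAlliance G k S ∧ S.card = s}

/-- The global defensive `k`-alliance number. -/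
noncomputable def globalDefAllianceNum {V : Type*} [Fintype V] [DecidableEq V] (G : SimpleGraph V)
    [DecidableRel G.Adj] (k : ℤ) : ℕ :=
  sInf {s : ℕ | ∃ S : Finset V, IsGlobalDefensiveAlliance G k S ∧ S.card = s}

/-- A partition of the vertex set all whose parts are defensive `k`-alliances. -/
def IsDefAlliancePartition {V : Type*} [Fintype V] [DecidableEq V] (G : SimpleGraph V)
    [DecidableRel G.Adj] (k : ℤ) (P : Finpartition (univ : Finset V)) : Prop :=
  ∀ S ∈ P.parts, IsDefensiveAlliance G k S

/-- A partition of the vertex set all whose parts are global defensive `k`-alliances. -/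
def IsGlobalDefAlliancePartition {V : Type*} [Fintype V] [DecidableEq V] (G : SimpleGraph V)
    [DecidableRel G.Adj] (k : ℤ) (P : Finpartition (univ : Finset V)) : Prop :=
  ∀ S ∈ P.parts, IsGlobalDefensiveAlliance G k S

/-- The defensive `k`-alliance partition number `ψₖᵈ`. -/
noncomputable def defPartitionNum {V : Type*} [Fintype V] [DecidableEq V] (G : SimpleGraph V)
    [DecidableRel G.Adj] (k : ℤ) : ℕ :=
  sSup {r : ℕ | ∃ P : Finpartition (univ : Finset V),
    IsDefAlliancePartition G k P ∧ P.parts.card = r}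

/-- The global defensive `k`-alliance partition number `ψₖᵍᵈ`. -/
noncomputable def globalDefPartitionNum {V : Type*} [Fintype V] [DecidableEq V]
    (G : SimpleGraph V) [DecidableRel G.Adj] (k : ℤ) : ℕ :=
  sSup {r : ℕ | ∃ P : Finpartition (univ : Finset V),
    IsGlobalDefAlliancePartition G k P ∧ P.parts.card = r}

instance {α β : Type*} [DecidableEq α] [DecidableEq β] (G : SimpleGraph α) (H : SimpleGraph β)
    [DecidableRel G.Adj] [DecidableRel H.Adj] : DecidableRel (G.boxProd H).Adj := fun _ _ =>
  decidable_of_iff' _ SimpleGraph.boxProd_adj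

/-!
At a vertex `(a, b)` of `S ×ˢ T` the neighbours in `G □ H` split into those moving `a` and those
moving `b`, so both the inside and the outside degrees add up and `S ×ˢ T` is a defensive
`(k₁ + k₂)`-alliance whenever `S` and `T` are defensive `k₁`- and `k₂`-alliances. The whole vertex
set of `H` is a defensive `k₂`-alliance because every vertex lies in some part of `Π₂` and so has
degree at least `k₂`; and `S ×ˢ V(H)` dominates as soon as `S` does. Taking for `S` a smallest
part of `Π₁` gives the bound `x₁ n₂`, and symmetrically `x₂ n₁`.
-/

open SimpleGraph

section Degrees

variable {V : Type*} [Fintype V] [DecidableEq V] {G : SimpleGraph V} [DecidableRel G.Adj]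

lemma degIn_add_degIn_compl (G : SimpleGraph V) [DecidableRel G.Adj] (S : Finset V) (v : V) :
    degIn G S v + degIn G Sᶜ v = G.degree v := by
  rw [← card_neighborFinset_eq_degree, neighborFinset_eq_filter, degIn, degIn,
    ← card_union_of_disjoint (disjoint_filter_filter disjoint_compl_right), ← filter_union,
    union_compl]

lemma IsDefensiveAlliance.le_degree {k : ℤ} {S : Finset V} (hS : IsDefensiveAlliance G k S)
    {v : V} (hv : v ∈ S) : k ≤ G.degree v := by
  have := hS.2 v hv
  have := degIn_add_degIn_compl G S v
  omega

lemma IsGlobalDefAlliancePartition.le_degree {k : ℤ} {P : Finpartition (univ : Finset V)}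
    (hP : IsGlobalDefAlliancePartition G k P) (v : V) : k ≤ G.degree v :=
  have ⟨_, hS, hv⟩ := P.exists_mem (mem_univ v)
  (hP _ hS).1.le_degree hv

lemma isDefensiveAlliance_univ [Nonempty V] {k : ℤ} (h : ∀ v, k ≤ G.degree v) :
    IsDefensiveAlliance G k univ := by
  refine ⟨univ_nonempty, fun v _ => ?_⟩
  have := degIn_add_degIn_compl G univ v
  simp only [compl_univ, degIn, filter_empty, card_empty, add_zero] at this ⊢
  have := h v
  omega

lemma globalDefAllianceNum_le_card {k : ℤ} {S : Finset V}
    (hS : IsGlobalDefensiveAlliance G k S) : globalDefAllianceNum G k ≤ S.card :=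
  Nat.sInf_le ⟨S, hS, rfl⟩

end Degrees

section BoxProd

variable {α β : Type*} [Fintype α] [Fintype β] [DecidableEq α] [DecidableEq β]
  {G : SimpleGraph α} {H : SimpleGraph β}

lemma IsDominatingSet.boxProd_product_univ {S : Finset α} (hS : IsDominatingSet G S) :
    IsDominatingSet (G □ H) (S ×ˢ univ) := fun ⟨a, b⟩ hab =>
  have ⟨a', ha', hadj⟩ := hS a fun ha => hab (mem_product.2 ⟨ha, mem_univ b⟩)
  ⟨(a', b), mem_product.2 ⟨ha', mem_univ b⟩, Or.inl ⟨hadj, rfl⟩⟩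

lemma IsDominatingSet.boxProd_univ_product {T : Finset β} (hT : IsDominatingSet H T) :
    IsDominatingSet (G □ H) (univ ×ˢ T) := fun ⟨a, b⟩ hab =>
  have ⟨b', hb', hadj⟩ := hT b fun hb => hab (mem_product.2 ⟨mem_univ a, hb⟩)
  ⟨(a, b'), mem_product.2 ⟨mem_univ a, hb'⟩, Or.inr ⟨hadj, rfl⟩⟩

variable [DecidableRel G.Adj] [DecidableRel H.Adj]

lemma degIn_boxProd_product {S : Finset α} {T : Finset β} {a : α} {b : β}
    (ha : a ∈ S) (hb : b ∈ T) :
    degIn (G □ H) (S ×ˢ T) (a, b) = degIn G S a + degIn H T b := by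
  have hsplit : (S ×ˢ T).filter (fun u => (G □ H).Adj (a, b) u) =
      (S.filter (G.Adj a) ×ˢ {b}).disjUnion ({a} ×ˢ T.filter (H.Adj b))
        (disjoint_product.2 <| Or.inl <| disjoint_left.2 fun _ hx hxa =>
          G.irrefl (mem_singleton.1 hxa ▸ (mem_filter.1 hx).2)) := by
    ext ⟨x, y⟩
    simp only [mem_filter, mem_product, mem_disjUnion, mem_singleton, boxProd_adj]
    constructor
    · rintro ⟨⟨hx, hy⟩, ⟨hxa, rfl⟩ | ⟨hyb, rfl⟩⟩
      exacts [Or.inl ⟨⟨hx, hxa⟩, rfl⟩, Or.inr ⟨rfl, hy, hyb⟩]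
    · rintro (⟨⟨hx, hxa⟩, rfl⟩ | ⟨rfl, hy, hyb⟩)
      exacts [⟨⟨hx, hb⟩, Or.inl ⟨hxa, rfl⟩⟩, ⟨⟨ha, hy⟩, Or.inr ⟨hyb, rfl⟩⟩]
  rw [degIn, hsplit, card_disjUnion, card_product, card_product, card_singleton,
    card_singleton, mul_one, one_mul, degIn, degIn]

lemma degIn_compl_boxProd_product {S : Finset α} {T : Finset β} {a : α} {b : β}
    (ha : a ∈ S) (hb : b ∈ T) :
    degIn (G □ H) (S ×ˢ T)ᶜ (a, b) = degIn G Sᶜ a + degIn H Tᶜ b := by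
  have hGH := degIn_add_degIn_compl (G □ H) (S ×ˢ T) (a, b)
  rw [degree_boxProd, degIn_boxProd_product ha hb, ← degIn_add_degIn_compl G S a,
    ← degIn_add_degIn_compl H T b] at hGH
  omega

theorem IsDefensiveAlliance.boxProd {k₁ k₂ : ℤ} {S : Finset α} {T : Finset β}
    (hS : IsDefensiveAlliance G k₁ S) (hT : IsDefensiveAlliance H k₂ T) :
    IsDefensiveAlliance (G □ H) (k₁ + k₂) (S ×ˢ T) := by
  refine ⟨hS.1.product hT.1, fun ⟨a, b⟩ hab => ?_⟩
  obtain ⟨ha, hb⟩ := mem_product.1 hab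
  rw [degIn_boxProd_product ha hb, degIn_compl_boxProd_product ha hb]
  push_cast
  linarith [hS.2 a ha, hT.2 b hb]

theorem IsGlobalDefensiveAlliance.boxProd_product_univ [Nonempty β] {k₁ k₂ : ℤ}
    {S : Finset α} (hS : IsGlobalDefensiveAlliance G k₁ S) (hH : ∀ b, k₂ ≤ H.degree b) :
    IsGlobalDefensiveAlliance (G □ H) (k₁ + k₂) (S ×ˢ univ) :=
  ⟨IsDefensiveAlliance.boxProd hS.1 (isDefensiveAlliance_univ hH),
    IsDominatingSet.boxProd_product_univ hS.2⟩

theorem IsGlobalDefensiveAlliance.boxProd_univ_product [Nonempty α] {k₁ k₂ : ℤ}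
    {T : Finset β} (hG : ∀ a, k₁ ≤ G.degree a) (hT : IsGlobalDefensiveAlliance H k₂ T) :
    IsGlobalDefensiveAlliance (G □ H) (k₁ + k₂) (univ ×ˢ T) :=
  ⟨IsDefensiveAlliance.boxProd (isDefensiveAlliance_univ hG) hT.1,
    IsDominatingSet.boxProd_univ_product hT.2⟩

end BoxProd

theorem statement17_general {α β : Type*} [Fintype α] [Fintype β] [DecidableEq α] [DecidableEq β]
    (G : SimpleGraph α) (H : SimpleGraph β) [DecidableRel G.Adj] [DecidableRel H.Adj]
    (k₁ k₂ : ℤ)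
    (P₁ : Finpartition (univ : Finset α)) (P₂ : Finpartition (univ : Finset β))
    (hP₁ : IsGlobalDefAlliancePartition G k₁ P₁)
    (hP₂ : IsGlobalDefAlliancePartition H k₂ P₂)
    (x₁ x₂ : ℕ)
    (hx₁ : IsLeast {c : ℕ | ∃ S ∈ P₁.parts, S.card = c} x₁)
    (hx₂ : IsLeast {c : ℕ | ∃ S ∈ P₂.parts, S.card = c} x₂) :
    globalDefAllianceNum (G.boxProd H) (k₁ + k₂) ≤
      min (x₁ * Fintype.card β) (x₂ * Fintype.card α) := by
  obtain ⟨S, hS, rfl⟩ := hx₁.1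
  obtain ⟨T, hT, rfl⟩ := hx₂.1
  have hS : IsGlobalDefensiveAlliance G k₁ S := hP₁ S hS
  have hT : IsGlobalDefensiveAlliance H k₂ T := hP₂ T hT
  have : Nonempty α := hS.1.1.to_subtype.map Subtype.val
  have : Nonempty β := hT.1.1.to_subtype.map Subtype.val
  refine le_min ?_ ?_
  · simpa [card_product] using
      globalDefAllianceNum_le_card (hS.boxProd_product_univ hP₂.le_degree)
  · simpa [card_product, mul_comm] using
      globalDefAllianceNum_le_card (IsGlobalDefensiveAlliance.boxProd_univ_product hP₁.le_degree hT)

/-- If `Γᵢ` (of order `nᵢ`) admits a partition `Πᵢ` into `rᵢ ≥ 1` global defensive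
`kᵢ`-alliances and `xᵢ` is the minimum cardinality of a part of `Πᵢ`, then
`γ_{k₁+k₂}ᵈ(Γ₁×Γ₂) ≤ min{x₁ n₂, x₂ n₁}`. -/
theorem statement17 {α β : Type*} [Fintype α] [Fintype β] [DecidableEq α] [DecidableEq β]
    (G : SimpleGraph α) (H : SimpleGraph β) [DecidableRel G.Adj] [DecidableRel H.Adj]
    (k₁ k₂ : ℤ)
    (P₁ : Finpartition (univ : Finset α)) (P₂ : Finpartition (univ : Finset β))
    (hP₁ : IsGlobalDefAlliancePartition G k₁ P₁)
    (hP₂ : IsGlobalDefAlliancePartition H k₂ P₂)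
    (hr₁ : 1 ≤ P₁.parts.card) (hr₂ : 1 ≤ P₂.parts.card)
    (x₁ x₂ : ℕ)
    (hx₁ : IsLeast {c : ℕ | ∃ S ∈ P₁.parts, S.card = c} x₁)
    (hx₂ : IsLeast {c : ℕ | ∃ S ∈ P₂.parts, S.card = c} x₂) :
    globalDefAllianceNum (G.boxProd H) (k₁ + k₂) ≤
      min (x₁ * Fintype.card β) (x₂ * Fintype.card α) :=
  statement17_general G H k₁ k₂ P₁ P₂ hP₁ hP₂ x₁ x₂ hx₁ hx₂
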